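/- For online gradient descent with decision set X a compact convex subset of R^d of diameter D, convex differentiable losses ℓ_t with gradients bounded in norm by G, and constant stepsize α = D/(G√T), the regret satisfies Reg(T) = Σ_{t=1}^T ℓ_t(x_t) − min_{x∈X} Σ_{t=1}^T ℓ_t(x) ≤ D G √T. -/

import Mathlib

/-! Convexity gives `ℓ_t(x_t) - ℓ_t(z) ≤ ⟪∇ℓ_t(x_t), x_t - z⟫`, and since projecting onto a convex
set moves no point farther from `z ∈ X`, expanding `‖x_t - α ∇ℓ_t(x_t) - z‖²` bounds
`2α ⟪∇ℓ_t(x_t), x_t - z⟫` by `‖x_t - z‖² - ‖x_{t+1} - z‖² + α²G²`. Summing, the distances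
telescope to at most `D²`, so the regret against `z` is at most `D²/(2α) + αG²T/2`, which equals
`DG√T` for `α = D/(G√T)`. -/

open Finset
open scoped InnerProductSpace

theorem Finset.sum_Icc_le_of_le_sub_succ_add {r A : ℕ → ℝ} {c : ℝ}
    (h : ∀ t, 1 ≤ t → r t ≤ A t - A (t + 1) + c) (T : ℕ) :
    ∑ t ∈ Icc 1 T, r t ≤ A 1 - A (T + 1) + T * c := by
  induction T with
  | zero => simp
  | succ T ih =>
    rw [sum_Icc_succ_top (by omega), Nat.cast_succ]
    linarith [h (T + 1) (by omega)]

variable {E : Type*} [NormedAddCommGroup E] [InnerProductSpace ℝ E]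

theorem Convex.norm_sub_le_of_isMinOn {X : Set E} (hX : Convex ℝ X) {y p z : E} (hp : p ∈ X)
    (hmin : IsMinOn (‖· - y‖) X p) (hz : z ∈ X) : ‖p - z‖ ≤ ‖y - z‖ := by
  have hinf : ‖y - p‖ = ⨅ w : X, ‖y - w‖ := by
    have hmin' : IsMinOn (fun w => ‖y - w‖) X p := by simpa only [norm_sub_rev y] using hmin
    exact (hmin'.iInf_eq hp).symm
  have hobtuse : ⟪y - p, z - p⟫_ℝ ≤ 0 :=
    (norm_eq_iInf_iff_real_inner_le_zero hX hp).1 hinf z hz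
  have hpyth : ‖y - z‖ ^ 2 = ‖y - p‖ ^ 2 - 2 * ⟪y - p, z - p⟫_ℝ + ‖p - z‖ ^ 2 := by
    rw [show y - z = (y - p) - (z - p) by abel, norm_sub_sq_real, norm_sub_rev z]
  refine (sq_le_sq₀ (norm_nonneg _) (norm_nonneg _)).1 ?_
  nlinarith [sq_nonneg ‖y - p‖]

theorem two_mul_inner_le_of_norm_sub_le_norm_sub_smul {x x' v z : E} {α : ℝ}
    (h : ‖x' - z‖ ≤ ‖x - α • v - z‖) :
    2 * α * ⟪v, x - z⟫_ℝ ≤ ‖x - z‖ ^ 2 - ‖x' - z‖ ^ 2 + α ^ 2 * ‖v‖ ^ 2 := by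
  have hexp : ‖x - α • v - z‖ ^ 2 = ‖x - z‖ ^ 2 - 2 * α * ⟪v, x - z⟫_ℝ + α ^ 2 * ‖v‖ ^ 2 := by
    rw [show x - α • v - z = (x - z) - α • v by abel, norm_sub_sq_real, real_inner_smul_right,
      norm_smul, mul_pow, Real.norm_eq_abs, sq_abs, real_inner_comm]
    ring
  nlinarith [pow_le_pow_left₀ (norm_nonneg _) h 2]

theorem ConvexOn.inner_gradient_le_sub [CompleteSpace E] {s : Set E} {f : E → ℝ}
    (hf : ConvexOn ℝ s f) {x y g : E} (hx : x ∈ s) (hy : y ∈ s) (hg : HasGradientAt f g x) :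
    ⟪g, y - x⟫_ℝ ≤ f y - f x := by
  let L : ℝ →ᵃ[ℝ] E := AffineMap.lineMap x y
  have hφ : HasDerivAt (f ∘ L) ⟪g, y - x⟫_ℝ 0 := by
    have h : HasFDerivAt f (InnerProductSpace.toDual ℝ E g) (L 0) := by
      simpa [L] using hg.hasFDerivAt
    simpa using h.comp_hasDerivAt (0 : ℝ) AffineMap.hasDerivAt_lineMap
  have := (hf.comp_affineMap L).le_slope_of_hasDerivAt
    (x := 0) (y := 1) (by simpa [L] using hx) (by simpa [L] using hy) one_pos hφ
  simpa [slope_def_field, L] using this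

section OnlineGradientDescent

variable {X : Set E} {P : E → E} {ℓ : ℕ → E → ℝ} {g : ℕ → E → E} {x : ℕ → E} {α D G : ℝ}

theorem ogd_iterate_mem (hP : ∀ y, P y ∈ X) (hx1 : x 1 ∈ X)
    (hiter : ∀ t, 1 ≤ t → x (t + 1) = P (x t - α • g t (x t))) {t : ℕ} (ht : 1 ≤ t) :
    x t ∈ X := by
  induction t, ht using Nat.le_induction with
  | base => exact hx1
  | succ t ht _ => rw [hiter t ht]; exact hP _

theorem ogd_two_mul_sub_le [CompleteSpace E] (hX : Convex ℝ X)
    (hP : ∀ y, P y ∈ X ∧ ∀ z ∈ X, ‖P y - y‖ ≤ ‖z - y‖)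
    (hconv : ∀ t, ConvexOn ℝ X (ℓ t)) (hgrad : ∀ t y, HasGradientAt (ℓ t) (g t y) y)
    (hGbound : ∀ t, ∀ y ∈ X, ‖g t y‖ ≤ G) (hα : 0 ≤ α) (hx1 : x 1 ∈ X)
    (hiter : ∀ t, 1 ≤ t → x (t + 1) = P (x t - α • g t (x t)))
    {z : E} (hz : z ∈ X) {t : ℕ} (ht : 1 ≤ t) :
    2 * α * (ℓ t (x t) - ℓ t z) ≤ ‖x t - z‖ ^ 2 - ‖x (t + 1) - z‖ ^ 2 + α ^ 2 * G ^ 2 := by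
  have hxt : x t ∈ X := ogd_iterate_mem (fun y => (hP y).1) hx1 hiter ht
  have hfirst : ℓ t (x t) - ℓ t z ≤ ⟪g t (x t), x t - z⟫_ℝ := by
    have := (hconv t).inner_gradient_le_sub hxt hz (hgrad t (x t))
    rw [← neg_sub (x t) z, inner_neg_right] at this
    linarith
  have hproj : ‖x (t + 1) - z‖ ≤ ‖x t - α • g t (x t) - z‖ := by
    rw [hiter t ht]
    exact hX.norm_sub_le_of_isMinOn (hP _).1 (isMinOn_iff.2 (hP _).2) hz
  have hG : ‖g t (x t)‖ ^ 2 ≤ G ^ 2 :=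
    pow_le_pow_left₀ (norm_nonneg _) (hGbound t _ hxt) 2
  nlinarith [two_mul_inner_le_of_norm_sub_le_norm_sub_smul hproj, sq_nonneg α]

theorem ogd_regret_le [CompleteSpace E] (hX : Convex ℝ X)
    (hdiam : ∀ x ∈ X, ∀ y ∈ X, ‖x - y‖ ≤ D)
    (hP : ∀ y, P y ∈ X ∧ ∀ z ∈ X, ‖P y - y‖ ≤ ‖z - y‖)
    (hconv : ∀ t, ConvexOn ℝ X (ℓ t)) (hgrad : ∀ t y, HasGradientAt (ℓ t) (g t y) y)
    (hGbound : ∀ t, ∀ y ∈ X, ‖g t y‖ ≤ G) (hα : 0 < α) (hx1 : x 1 ∈ X)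
    (hiter : ∀ t, 1 ≤ t → x (t + 1) = P (x t - α • g t (x t)))
    {z : E} (hz : z ∈ X) (T : ℕ) :
    ∑ t ∈ Icc 1 T, (ℓ t (x t) - ℓ t z) ≤ D ^ 2 / (2 * α) + α * G ^ 2 * T / 2 := by
  have hsum := Finset.sum_Icc_le_of_le_sub_succ_add (A := fun t => ‖x t - z‖ ^ 2)
    (r := fun t => 2 * α * (ℓ t (x t) - ℓ t z))
    (fun t ht => ogd_two_mul_sub_le hX hP hconv hgrad hGbound hα.le hx1 hiter hz ht) T
  have hD : ‖x 1 - z‖ ^ 2 ≤ D ^ 2 := pow_le_pow_left₀ (norm_nonneg _) (hdiam _ hx1 z hz) 2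
  rw [← mul_sum] at hsum
  rw [div_add_div _ _ (by positivity) two_ne_zero, le_div_iff₀ (by positivity)]
  nlinarith [sq_nonneg ‖x (T + 1) - z‖]

end OnlineGradientDescent

theorem sq_div_two_mul_add_eq_mul_sqrt {D G α : ℝ} {T : ℕ} (hD : 0 < D) (hG : 0 < G)
    (hT : 0 < T) (hα : α = D / (G * Real.sqrt T)) :
    D ^ 2 / (2 * α) + α * G ^ 2 * T / 2 = D * G * Real.sqrt T := by
  have hsqrt : 0 < Real.sqrt T := Real.sqrt_pos.2 (by exact_mod_cast hT)
  have hT' : Real.sqrt T ^ 2 = T := Real.sq_sqrt (Nat.cast_nonneg T)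
  subst hα
  field_simp
  linear_combination -hT'

theorem ogd_regret_sqrtT_general
    (d T : ℕ) (hT : 1 ≤ T)
    (X : Set (EuclideanSpace ℝ (Fin d)))
    (hXconv : Convex ℝ X)
    (D G : ℝ) (hD : 0 < D) (hG : 0 < G)
    (hdiam : ∀ x ∈ X, ∀ y ∈ X, ‖x - y‖ ≤ D)
    (ℓ : ℕ → EuclideanSpace ℝ (Fin d) → ℝ)
    (g : ℕ → EuclideanSpace ℝ (Fin d) → EuclideanSpace ℝ (Fin d))
    (hconv : ∀ t, ConvexOn ℝ Set.univ (ℓ t))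
    (hgrad : ∀ t x, HasGradientAt (ℓ t) (g t x) x)
    (hGbound : ∀ t, ∀ x ∈ X, ‖g t x‖ ≤ G)
    (P : EuclideanSpace ℝ (Fin d) → EuclideanSpace ℝ (Fin d))
    (hP : ∀ y, P y ∈ X ∧ ∀ z ∈ X, ‖P y - y‖ ≤ ‖z - y‖)
    (α : ℝ) (hα : α = D / (G * Real.sqrt T))
    (x : ℕ → EuclideanSpace ℝ (Fin d))
    (hx1 : x 1 ∈ X)
    (hiter : ∀ t, 1 ≤ t → x (t + 1) = P (x t - α • g t (x t))) :
    (∑ t ∈ Finset.Icc 1 T, ℓ t (x t)) -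
      sInf ((fun z => ∑ t ∈ Finset.Icc 1 T, ℓ t z) '' X) ≤ D * G * Real.sqrt T := by
  have hα0 : 0 < α := by
    rw [hα]
    have : 0 < Real.sqrt T := Real.sqrt_pos.2 (by exact_mod_cast hT)
    positivity
  have hregret : ∀ z ∈ X,
      ∑ t ∈ Icc 1 T, ℓ t (x t) - ∑ t ∈ Icc 1 T, ℓ t z ≤ D * G * Real.sqrt T := by
    intro z hz
    rw [← sum_sub_distrib, ← sq_div_two_mul_add_eq_mul_sqrt hD hG hT hα]
    exact ogd_regret_le hXconv hdiam hP (fun t => (hconv t).subset (Set.subset_univ X) hXconv)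
      hgrad hGbound hα0 hx1 hiter hz T
  have hcomparator : ∑ t ∈ Icc 1 T, ℓ t (x t) - D * G * Real.sqrt T ≤
      sInf ((fun z => ∑ t ∈ Icc 1 T, ℓ t z) '' X) := by
    refine le_csInf (Set.Nonempty.image _ ⟨x 1, hx1⟩) ?_
    rintro _ ⟨z, hz, rfl⟩
    linarith [hregret z hz]
  linarith

/-- Online gradient descent with constant stepsize `α = D/(G√T)` on convex
differentiable losses with gradients bounded by `G` over a compact convex
decision set of diameter `D` achieves regret at most `D G √T`. -/
theorem ogd_regret_sqrtT
    (d T : ℕ) (hT : 1 ≤ T)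
    (X : Set (EuclideanSpace ℝ (Fin d)))
    (hXc : IsCompact X) (hXconv : Convex ℝ X) (hXne : X.Nonempty)
    (D G : ℝ) (hD : 0 < D) (hG : 0 < G)
    (hdiam : ∀ x ∈ X, ∀ y ∈ X, ‖x - y‖ ≤ D)
    (ℓ : ℕ → EuclideanSpace ℝ (Fin d) → ℝ)
    (g : ℕ → EuclideanSpace ℝ (Fin d) → EuclideanSpace ℝ (Fin d))
    (hconv : ∀ t, ConvexOn ℝ Set.univ (ℓ t))
    (hgrad : ∀ t x, HasGradientAt (ℓ t) (g t x) x)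
    (hGbound : ∀ t, ∀ x ∈ X, ‖g t x‖ ≤ G)
    (P : EuclideanSpace ℝ (Fin d) → EuclideanSpace ℝ (Fin d))
    (hP : ∀ y, P y ∈ X ∧ ∀ z ∈ X, ‖P y - y‖ ≤ ‖z - y‖)
    (α : ℝ) (hα : α = D / (G * Real.sqrt T))
    (x : ℕ → EuclideanSpace ℝ (Fin d))
    (hx1 : x 1 ∈ X)
    (hiter : ∀ t, 1 ≤ t → x (t + 1) = P (x t - α • g t (x t))) :
    (∑ t ∈ Finset.Icc 1 T, ℓ t (x t)) -
      sInf ((fun z => ∑ t ∈ Finset.Icc 1 T, ℓ t z) '' X) ≤ D * G * Real.sqrt T :=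
  ogd_regret_sqrtT_general d T hT X hXconv D G hD hG hdiam ℓ g hconv hgrad hGbound P hP α hα x hx1
    hiter
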